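/- arXiv:1704.06314 — 2 statements merged into one kernel-verified Lean document; each statement's English description precedes it below -/
import Mathlib

section
/- There exist constants c > 0 and n₀ ∈ ℕ such that for all n ≥ n₀, all reals ε with 0 < ε ≤ 1/6, every set M ⊆ [n] with |M| = t, every set A ⊆ [n]∖M, and every set V ⊆ M ∪ A with V ∩ M ≠ ∅, the following holds: if f is the random Boolean function obtained by sampling, independently for each i ∈ [N], a set S_i ⊆ A (including each element of A independently with probability ε/√n) and a uniformly random function h_i depending only on the coordinates in S_i (i.e., h_i(x) = z_i(x|_{S_i}) for independent uniform bits z_i(b), b ∈ {0,1}^{S_i}), and setting f(x) = h_{Γ_M(x)}(x), then Pr[E_V(f) ≥ 2^n/5] ≥ 1 − exp(−2^{cn}). -/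
open Finset

/-- `f : {0,1}^n → {0,1}` is a `k`-junta: there is a set `S ⊆ [n]` with `|S| ≤ k`
such that `f x = f y` whenever `x` and `y` agree on all coordinates in `S`. -/
def IsJunta (n k : ℕ) (f : (Fin n → Bool) → Bool) : Prop :=
  ∃ S : Finset (Fin n), S.card ≤ k ∧
    ∀ x y : Fin n → Bool, (∀ i ∈ S, x i = y i) → f x = f y

/-- `f` is `ε`-far from every `k`-junta. -/
def FarFromJuntas (n k : ℕ) (ε : ℝ) (f : (Fin n → Bool) → Bool) : Prop :=
  ∀ g : (Fin n → Bool) → Bool, IsJunta n k g →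
    ε * 2 ^ n ≤ ((Finset.univ.filter (fun x => f x ≠ g x)).card : ℝ)

/-- Probability of obtaining exactly the subset `A` when each element of `U` is included
independently with probability `ρ` (and elements outside `U` are never included). -/
noncomputable def pSet {ι : Type*} [DecidableEq ι] (U : Finset ι) (ρ : ℝ) (A : Finset ι) : ℝ :=
  if A ⊆ U then ρ ^ A.card * (1 - ρ) ^ (U.card - A.card) else 0

/-- Zero out the coordinates outside `M`.  Two strings have the same `padTo M` iff they
agree on all coordinates of `M`, so `padTo M x` serves as the index `Γ_M(x)`:
it identifies the restriction `x|_M`. -/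
def padTo {n : ℕ} (M : Finset (Fin n)) (x : Fin n → Bool) : Fin n → Bool :=
  fun j => if j ∈ M then x j else false

/-- The function `f = f_{M,S,H}` built from the addressing set `M`, the family of subsets
`S_i ⊆ A` and the family of random functions `h_i(x) = z_i(x|_{S_i})`: on input `x`, the
index `i = Γ_M(x)` (represented by `padTo M x`) selects `S_i` and `z_i`, and the value is
`z_i` evaluated at the restriction of `x` to `S_i` (represented by `padTo (S i) x`). -/
def buildF {n : ℕ} (M : Finset (Fin n)) (S : (Fin n → Bool) → Finset (Fin n))
    (z : (Fin n → Bool) → (Fin n → Bool) → Bool) : (Fin n → Bool) → Bool :=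
  fun x => z (padTo M x) (padTo (S (padTo M x)) x)

open Classical in
/-- The probability, for fixed `M` and `A`, that the random function `f` obtained by
sampling each `S_i ⊆ A` (elements included independently with probability `ρ`) and
each `h_i` a uniformly random function of the coordinates in `S_i`, satisfies `E f`. -/
noncomputable def prSH (n : ℕ) (M A : Finset (Fin n)) (ρ : ℝ)
    (E : ((Fin n → Bool) → Bool) → Prop) : ℝ :=
  ∑ S : (Fin n → Bool) → Finset (Fin n),
    ∑ z : (Fin n → Bool) → (Fin n → Bool) → Bool,
      (if E (buildF M S z) then 1 else 0) * (∏ y : Fin n → Bool, pSet A ρ (S y)) /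
        (Fintype.card ((Fin n → Bool) → (Fin n → Bool) → Bool) : ℝ)

/-- The probability that a random function `f` drawn from the distribution `D` (with
`M` a uniformly random subset of `[n]` of size `t`, `A ⊆ [n]∖M` with each element
included independently with probability `ρA`, each `S_i ⊆ A` with rate `ρS`, and each
`h_i` a uniformly random function of the coordinates in `S_i`) satisfies `E f`.
Taking `ρA = 1/2` gives `D_yes`; taking `ρA = 1/2 + (log₂ n)/√n` gives `D_no`. -/
noncomputable def prD (n t : ℕ) (ρA ρS : ℝ)
    (E : ((Fin n → Bool) → Bool) → Prop) : ℝ :=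
  (∑ M ∈ Finset.univ.filter (fun M : Finset (Fin n) => M.card = t),
    ∑ A : Finset (Fin n), pSet Mᶜ ρA A * prSH n M A ρS E) / (n.choose t : ℝ)

/-- Flip the `ℓ`-th coordinate of `x`; the pair `(x, flipAt x ℓ)` is the edge of the
hypercube along direction `ℓ` with endpoint `x`. -/
def flipAt {n : ℕ} (x : Fin n → Bool) (ℓ : Fin n) : Fin n → Bool :=
  Function.update x ℓ (!x ℓ)

/-- `C` is a collection of pairwise vertex-disjoint `f`-bichromatic edges along
directions in `V`: each element `(x, ℓ)` of `C` represents the edge `(x, x^(ℓ))`. -/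
def DisjointBichromatic {n : ℕ} (f : (Fin n → Bool) → Bool) (V : Finset (Fin n))
    (C : Finset ((Fin n → Bool) × Fin n)) : Prop :=
  (∀ e ∈ C, e.2 ∈ V ∧ f e.1 ≠ f (flipAt e.1 e.2)) ∧
  ∀ e ∈ C, ∀ e' ∈ C, e ≠ e' →
    e.1 ≠ e'.1 ∧ e.1 ≠ flipAt e'.1 e'.2 ∧
    flipAt e.1 e.2 ≠ e'.1 ∧ flipAt e.1 e.2 ≠ flipAt e'.1 e'.2

/-!
Fix a direction `ℓ ∈ V ∩ M` and any choice of the sets `S_i`. The `ℓ`-edges `{x, x^(ℓ)}` with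
`x_ℓ = 0` are pairwise disjoint, and since `ℓ ∈ M` their two endpoints read bits of `z` from
disjoint halves of the index set (`i_ℓ = 0` versus `i_ℓ = 1`). Conditioning on the half read by the
lower endpoints, the number of bichromatic `ℓ`-edges is a sum of independent contributions of the
uniform bits in the other half, each bit touching at most `2^(n-|M|)` edges. Its mean is `2^n/4`,
so by Hoeffding's inequality it falls below `2^n/5` with probability at most `exp(-2^|M|/100)`,
whatever the `S_i` are. Finally `|M| = t ≥ (α - 1/2) n + 7` for large `n`, so `c = α - 1/2` works.
-/

section Hoeffding

theorem card_filter_le_sum_exp {α : Type*} (s : Finset α) (f : α → ℝ) (a : ℝ) {L : ℝ}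
    (hL : 0 ≤ L) : (#{x ∈ s | f x ≤ a} : ℝ) ≤ ∑ x ∈ s, Real.exp (L * (a - f x)) := by
  rw [natCast_card_filter]
  refine sum_le_sum fun x _ => ?_
  split_ifs with h
  · exact Real.one_le_exp (mul_nonneg hL (sub_nonneg.2 h))
  · positivity

variable {κ : Type*} [Fintype κ] [DecidableEq κ]

theorem sum_exp_sum_bool (φ : κ → Bool → ℝ) :
    ∑ w : κ → Bool, Real.exp (∑ k, φ k (w k)) =
      ∏ k, (Real.exp (φ k true) + Real.exp (φ k false)) := by
  simp only [Real.exp_sum]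
  rw [← Fintype.prod_sum (fun k b => Real.exp (φ k b))]
  simp only [Fintype.sum_bool]

theorem card_filter_sum_le_sub_le (g : κ → Bool → ℝ) {s R : ℝ} (hs : 0 < s) (hR : 0 < R)
    (hgR : ∑ k, (g k true - g k false) ^ 2 ≤ R) :
    (#{w : κ → Bool | ∑ k, g k (w k) ≤ ∑ k, (g k true + g k false) / 2 - s} : ℝ) ≤
      Fintype.card (κ → Bool) * Real.exp (-(2 * s ^ 2) / R) := by
  -- `L = 4s/R` minimizes the Chernoff exponent `-Ls + L²R/8`.
  set L := 4 * s / R with hL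
  obtain ⟨d, hd⟩ : ∃ d : κ → ℝ, ∀ k, d k = L * (g k true - g k false) / 2 := ⟨_, fun _ => rfl⟩
  have hexp (w : κ → Bool) :
      Real.exp (L * ((∑ k, (g k true + g k false) / 2 - s) - ∑ k, g k (w k))) =
        Real.exp (-(L * s)) *
          Real.exp (∑ k, L * ((g k true + g k false) / 2 - g k (w k))) := by
    rw [← Real.exp_add, ← Finset.mul_sum, Finset.sum_sub_distrib]
    ring_nf
  have hcosh (k : κ) : Real.exp (L * ((g k true + g k false) / 2 - g k true)) +
      Real.exp (L * ((g k true + g k false) / 2 - g k false)) ≤ 2 * Real.exp (d k ^ 2 / 2) := by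
    have := Real.cosh_le_exp_half_sq (d k)
    rw [Real.cosh_eq] at this
    have htrue : L * ((g k true + g k false) / 2 - g k true) = -d k := by rw [hd]; ring
    have hfalse : L * ((g k true + g k false) / 2 - g k false) = d k := by rw [hd]; ring
    rw [htrue, hfalse]
    linarith
  have hdR : ∑ k, d k ^ 2 / 2 ≤ L ^ 2 * R / 8 := by
    calc ∑ k, d k ^ 2 / 2 = L ^ 2 * (∑ k, (g k true - g k false) ^ 2) / 8 := by
          simp only [hd, Finset.mul_sum, Finset.sum_div]
          exact sum_congr rfl fun k _ => by ring
      _ ≤ L ^ 2 * R / 8 := by gcongr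
  calc (#{w : κ → Bool | ∑ k, g k (w k) ≤ ∑ k, (g k true + g k false) / 2 - s} : ℝ)
      ≤ ∑ w : κ → Bool,
          Real.exp (L * ((∑ k, (g k true + g k false) / 2 - s) - ∑ k, g k (w k))) :=
        card_filter_le_sum_exp _ _ _ (by positivity)
    _ = Real.exp (-(L * s)) * ∏ k, (Real.exp (L * ((g k true + g k false) / 2 - g k true)) +
          Real.exp (L * ((g k true + g k false) / 2 - g k false))) := by
        rw [sum_congr rfl fun w _ => hexp w, ← mul_sum,
          sum_exp_sum_bool fun k b => L * ((g k true + g k false) / 2 - g k b)]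
    _ ≤ Real.exp (-(L * s)) * ∏ k, 2 * Real.exp (d k ^ 2 / 2) := by
        gcongr with k
        exact hcosh k
    _ = Fintype.card (κ → Bool) * Real.exp (-(L * s) + ∑ k, d k ^ 2 / 2) := by
        rw [prod_mul_distrib, prod_const, Real.exp_add, Real.exp_sum, card_univ,
          Fintype.card_fun, Fintype.card_bool, Nat.cast_pow, Nat.cast_ofNat]
        ring
    _ ≤ Fintype.card (κ → Bool) * Real.exp (-(2 * s ^ 2) / R) := by
        gcongr
        calc -(L * s) + ∑ k, d k ^ 2 / 2 ≤ -(L * s) + L ^ 2 * R / 8 := by linarith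
          _ = -(2 * s ^ 2) / R := by rw [hL]; field_simp; ring

theorem card_filter_card_ne_le {X : Type*} (P : Finset X) (key : X → κ) (c : X → Bool) {m : ℕ}
    (hm : ∀ k, #{x ∈ P | key x = k} ≤ m) {s : ℝ} (hs : 0 < s) (hmP : 0 < m * #P) :
    (#{w : κ → Bool | (#{x ∈ P | w (key x) ≠ c x} : ℝ) ≤ #P / 2 - s} : ℝ) ≤
      Fintype.card (κ → Bool) * Real.exp (-(2 * s ^ 2) / (m * #P)) := by
  set N : κ → Bool → ℕ := fun k b => #{x ∈ P | key x = k ∧ c x ≠ b} with hN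
  have hcount (w : κ → Bool) : #{x ∈ P | w (key x) ≠ c x} = ∑ k, N k (w k) := by
    rw [card_eq_sum_card_fiberwise fun x _ => mem_univ (key x)]
    refine sum_congr rfl fun k _ => ?_
    rw [filter_filter]
    congr 1
    refine filter_congr fun x _ => ?_
    constructor
    · rintro ⟨h, rfl⟩; exact ⟨rfl, Ne.symm h⟩
    · rintro ⟨rfl, h⟩; exact ⟨Ne.symm h, rfl⟩
  have hfiber (k : κ) : N k true + N k false = #{x ∈ P | key x = k} := by
    rw [← card_filter_add_card_filter_not (fun x => c x = true) (s := {x ∈ P | key x = k}),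
      add_comm, filter_filter, filter_filter]
    simp only [hN, ne_eq, Bool.not_eq_false]
  have htotal : ∑ k, (#{x ∈ P | key x = k} : ℝ) = #P := by
    exact_mod_cast (card_eq_sum_card_fiberwise fun x _ => mem_univ (key x)).symm
  refine le_of_eq_of_le ?_
    (card_filter_sum_le_sub_le (fun k b => (N k b : ℝ)) hs (by exact_mod_cast hmP) ?_)
  · congr 2
    ext w
    simp only [hcount, ← htotal, ← hfiber, sum_div, Nat.cast_add, Nat.cast_sum]
  · calc ∑ k, ((N k true : ℝ) - N k false) ^ 2 ≤ ∑ k, (m : ℝ) * #{x ∈ P | key x = k} := by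
          refine sum_le_sum fun k _ => ?_
          have hk : (#{x ∈ P | key x = k} : ℝ) ≤ m := by exact_mod_cast hm k
          have hNk : (N k true : ℝ) + N k false = #{x ∈ P | key x = k} := by
            exact_mod_cast hfiber k
          nlinarith [(N k true).cast_nonneg (α := ℝ), (N k false).cast_nonneg (α := ℝ)]
      _ = m * #P := by rw [← mul_sum, htotal]

theorem card_filter_card_ne_subtype_le (p : κ → Prop) [DecidablePred p] {X : Type*}
    (P : Finset X) (key : X → {k // p k}) (key' : X → {k // ¬ p k}) {m : ℕ}
    (hm : ∀ k, #{x ∈ P | key x = k} ≤ m) {s : ℝ} (hs : 0 < s) (hmP : 0 < m * #P) :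
    (#{z : κ → Bool | (#{x ∈ P | z (key x) ≠ z (key' x)} : ℝ) ≤ #P / 2 - s} : ℝ) ≤
      Fintype.card (κ → Bool) * Real.exp (-(2 * s ^ 2) / (m * #P)) := by
  set e := Equiv.piEquivPiSubtypeProd p fun _ => Bool
  have hsplit (z : κ → Bool) :
      #{x ∈ P | z (key x) ≠ z (key' x)} = #{x ∈ P | (e z).1 (key x) ≠ (e z).2 (key' x)} := rfl
  calc (#{z : κ → Bool | (#{x ∈ P | z (key x) ≠ z (key' x)} : ℝ) ≤ #P / 2 - s} : ℝ)
      = ∑ u : {k // ¬ p k} → Bool,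
          (#{w : {k // p k} → Bool |
            (#{x ∈ P | w (key x) ≠ u (key' x)} : ℝ) ≤ #P / 2 - s} : ℝ) := by
        simp only [natCast_card_filter, hsplit]
        rw [← e.symm.sum_comp, Fintype.sum_prod_type, sum_comm]
        simp
    _ ≤ ∑ u : {k // ¬ p k} → Bool,
          Fintype.card ({k // p k} → Bool) * Real.exp (-(2 * s ^ 2) / (m * #P)) :=
        sum_le_sum fun u _ => card_filter_card_ne_le P key (u ∘ key') hm hs hmP
    _ = Fintype.card (κ → Bool) * Real.exp (-(2 * s ^ 2) / (m * #P)) := by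
        rw [sum_const, nsmul_eq_mul, ← mul_assoc, card_univ, ← Nat.cast_mul, ← Fintype.card_prod,
          Fintype.card_congr (e.trans (Equiv.prodComm _ _)).symm]

end Hoeffding

section Hypercube

variable {n : ℕ}

theorem flipAt_apply_self (x : Fin n → Bool) (ℓ : Fin n) : flipAt x ℓ ℓ = !x ℓ :=
  Function.update_self ..

theorem flipAt_involutive (ℓ : Fin n) : Function.Involutive (flipAt · ℓ) := fun x => by
  simp [flipAt]

theorem flipAt_eq_update_true {x : Fin n → Bool} {ℓ : Fin n} (hx : x ℓ = false) :
    flipAt x ℓ = Function.update x ℓ true := by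
  simp [flipAt, hx]

theorem two_mul_card_filter_apply_eq_false (ℓ : Fin n) :
    2 * #{x : Fin n → Bool | x ℓ = false} = 2 ^ n := by
  have hflip : #{x : Fin n → Bool | x ℓ = false} = #{x : Fin n → Bool | ¬ x ℓ = false} :=
    card_equiv (Function.Involutive.toPerm _ (flipAt_involutive ℓ)) fun x => by
      simp [flipAt_apply_self]
  rw [two_mul]
  nth_rw 2 [hflip]
  rw [card_filter_add_card_filter_not, card_univ, Fintype.card_fun, Fintype.card_bool,
    Fintype.card_fin]

theorem card_filter_padTo_eq_le (M : Finset (Fin n)) (i : Fin n → Bool) :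
    #{x : Fin n → Bool | padTo M x = i} ≤ 2 ^ (n - #M) := by
  calc #{x : Fin n → Bool | padTo M x = i} ≤ #(univ : Finset ((Mᶜ : Finset (Fin n)) → Bool)) := by
        refine card_le_card_of_injOn (fun x j => x j) (fun _ _ => mem_univ _) ?_
        intro x hx x' hx' hxx'
        funext j
        by_cases hj : j ∈ M
        · have := congrFun ((mem_filter.1 hx).2.trans (mem_filter.1 hx').2.symm) j
          simpa [padTo, hj] using this
        · exact congrFun hxx' ⟨j, mem_compl.2 hj⟩
    _ = 2 ^ (n - #M) := by simp

theorem padTo_update {M : Finset (Fin n)} {ℓ : Fin n} (hℓ : ℓ ∈ M) (x : Fin n → Bool) (b : Bool) :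
    padTo M (Function.update x ℓ b) = Function.update (padTo M x) ℓ b := by
  funext j
  by_cases hj : j = ℓ
  · subst hj; simp [padTo, hℓ]
  · simp [padTo, hj]

theorem exists_disjointBichromatic_of_le_card (f : (Fin n → Bool) → Bool) {V : Finset (Fin n)}
    {ℓ : Fin n} (hℓ : ℓ ∈ V)
    (h : 2 ^ n ≤ 5 * #{x : Fin n → Bool | x ℓ = false ∧ f x ≠ f (flipAt x ℓ)}) :
    ∃ C, DisjointBichromatic f V C ∧ (2 : ℝ) ^ n / 5 ≤ #C := by
  refine ⟨(univ.filter fun x : Fin n → Bool => x ℓ = false ∧ f x ≠ f (flipAt x ℓ)).map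
    ⟨fun x => (x, ℓ), fun _ _ => congrArg Prod.fst⟩, ⟨?_, ?_⟩, ?_⟩
  · simp only [Finset.mem_map, mem_filter, mem_univ, true_and]
    rintro _ ⟨x, ⟨-, hx⟩, rfl⟩
    exact ⟨hℓ, hx⟩
  · simp only [Finset.mem_map, mem_filter, mem_univ, true_and]
    rintro _ ⟨x, ⟨hx, -⟩, rfl⟩ _ ⟨x', ⟨hx', -⟩, rfl⟩ hne
    show x ≠ x' ∧ x ≠ flipAt x' ℓ ∧ flipAt x ℓ ≠ x' ∧ flipAt x ℓ ≠ flipAt x' ℓ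
    have hxx' : x ≠ x' := fun h => hne (h ▸ rfl)
    refine ⟨hxx', fun h => ?_, fun h => ?_, fun h => hxx' ((flipAt_involutive ℓ).injective h)⟩
    · simpa [hx, hx', flipAt_apply_self] using congrFun h ℓ
    · simpa [hx, hx', flipAt_apply_self] using congrFun h ℓ
  · rw [card_map, div_le_iff₀ (by norm_num), mul_comm]
    exact_mod_cast h

def queriedBit (M : Finset (Fin n)) (S : (Fin n → Bool) → Finset (Fin n))
    (x : Fin n → Bool) : (Fin n → Bool) × (Fin n → Bool) :=
  (padTo M x, padTo (S (padTo M x)) x)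

theorem buildF_eq_uncurry (M : Finset (Fin n)) (S : (Fin n → Bool) → Finset (Fin n))
    (z : (Fin n → Bool) → (Fin n → Bool) → Bool) (x : Fin n → Bool) :
    buildF M S z x = Function.uncurry z (queriedBit M S x) := rfl

theorem card_filter_few_bichromatic_le (M : Finset (Fin n))
    (S : (Fin n → Bool) → Finset (Fin n)) {ℓ : Fin n} (hℓ : ℓ ∈ M) :
    (#{z : (Fin n → Bool) → (Fin n → Bool) → Bool |
        5 * #{x | x ℓ = false ∧ buildF M S z x ≠ buildF M S z (flipAt x ℓ)} < 2 ^ n} : ℝ) ≤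
      Fintype.card ((Fin n → Bool) → (Fin n → Bool) → Bool) * Real.exp (-(2 ^ #M / 100)) := by
  set P : Finset (Fin n → Bool) := {x | x ℓ = false}
  -- Defined through `update` to be total; on `P` they are the bits read at `flipAt x ℓ` and `x`.
  let key (x : Fin n → Bool) : {k : (Fin n → Bool) × (Fin n → Bool) // k.1 ℓ = true} :=
    ⟨queriedBit M S (Function.update x ℓ true), by simp [queriedBit, padTo, hℓ]⟩
  let key' (x : Fin n → Bool) : {k : (Fin n → Bool) × (Fin n → Bool) // ¬ k.1 ℓ = true} :=
    ⟨queriedBit M S (Function.update x ℓ false), by simp [queriedBit, padTo, hℓ]⟩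
  have hedge (z : (Fin n → Bool) → (Fin n → Bool) → Bool) :
      #{x | x ℓ = false ∧ buildF M S z x ≠ buildF M S z (flipAt x ℓ)} =
        #{x ∈ P | Function.uncurry z (key x) ≠ Function.uncurry z (key' x)} := by
    rw [filter_filter]
    refine congrArg card (filter_congr fun x _ => and_congr_right fun hx => ?_)
    rw [buildF_eq_uncurry, buildF_eq_uncurry, flipAt_eq_update_true hx, ne_comm]
    simp [key, key', ← hx]
  have hfiber (k) : #{x ∈ P | key x = k} ≤ 2 ^ (n - #M) := by
    refine le_trans (card_le_card fun x hx => ?_) (card_filter_padTo_eq_le M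
      (Function.update k.1.1 ℓ false))
    obtain ⟨hxP, rfl⟩ := mem_filter.1 hx
    simp only [P, mem_filter, mem_univ, true_and] at hxP ⊢
    simp [key, queriedBit, padTo_update hℓ, padTo, hℓ, hxP]
  have hP : (#P : ℝ) = 2 ^ n / 2 := by
    rw [eq_div_iff two_ne_zero, mul_comm]; exact_mod_cast two_mul_card_filter_apply_eq_false ℓ
  have hM : (2 : ℝ) ^ (n - #M) * 2 ^ #M = 2 ^ n := by
    rw [← pow_add, Nat.sub_add_cancel (card_le_univ M |>.trans_eq (Fintype.card_fin n))]
  calc _ = (#{z : (Fin n → Bool) × (Fin n → Bool) → Bool |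
          5 * #{x ∈ P | z (key x) ≠ z (key' x)} < 2 ^ n} : ℝ) := by
        rw [← card_map (Equiv.curry _ _ _).symm.toEmbedding, map_filter]
        simp [hedge]
    _ ≤ (#{z : (Fin n → Bool) × (Fin n → Bool) → Bool |
          (#{x ∈ P | z (key x) ≠ z (key' x)} : ℝ) ≤ #P / 2 - 2 ^ n / 20} : ℝ) := by
        gcongr with z
        intro hz
        rw [hP]
        have : (5 : ℝ) * #{x ∈ P | z (key x) ≠ z (key' x)} ≤ 2 ^ n := by exact_mod_cast hz.le
        linarith
    _ ≤ Fintype.card ((Fin n → Bool) × (Fin n → Bool) → Bool) *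
          Real.exp (-(2 * (2 ^ n / 20) ^ 2) / ((2 ^ (n - #M) : ℕ) * #P)) :=
        card_filter_card_ne_subtype_le _ P key key' hfiber (by positivity)
          (mul_pos (by positivity) (by exact_mod_cast (show (0 : ℝ) < #P by rw [hP]; positivity)))
    _ = _ := by
        rw [Fintype.card_congr (Equiv.curry _ _ Bool), hP, ← hM]
        congr 2
        push_cast
        field_simp
        ring

end Hypercube

theorem pSet_nonneg {ι : Type*} [DecidableEq ι] (U : Finset ι) {ρ : ℝ} (h0 : 0 ≤ ρ) (h1 : ρ ≤ 1)
    (A : Finset ι) : 0 ≤ pSet U ρ A := by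
  unfold pSet
  split_ifs
  · exact mul_nonneg (pow_nonneg h0 _) (pow_nonneg (sub_nonneg.2 h1) _)
  · exact le_rfl

theorem sum_pSet {ι : Type*} [DecidableEq ι] [Fintype ι] (U : Finset ι) (ρ : ℝ) :
    ∑ A, pSet U ρ A = 1 := by
  have hsub : ({A | A ⊆ U} : Finset (Finset ι)) = U.powerset := by ext; simp
  simp only [pSet]
  rw [sum_ite, sum_const_zero, add_zero, hsub, sum_pow_mul_eq_add_pow, add_sub_cancel,
    one_pow]

open Classical in
theorem one_sub_le_prSH {n : ℕ} (M A : Finset (Fin n)) {ρ : ℝ} (hρ0 : 0 ≤ ρ) (hρ1 : ρ ≤ 1)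
    (E : ((Fin n → Bool) → Bool) → Prop) {q : ℝ}
    (hE : ∀ S, (#{z | ¬ E (buildF M S z)} : ℝ) ≤
      Fintype.card ((Fin n → Bool) → (Fin n → Bool) → Bool) * q) :
    1 - q ≤ prSH n M A ρ E := by
  set Z := (Fin n → Bool) → (Fin n → Bool) → Bool
  have hweights : ∑ S : (Fin n → Bool) → Finset (Fin n), ∏ y, pSet A ρ (S y) = 1 := by
    rw [← Fintype.prod_sum fun _ B => pSet A ρ B]
    simp [sum_pSet]
  have hZ : (0 : ℝ) < Fintype.card Z := by exact_mod_cast Fintype.card_pos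
  calc 1 - q = ∑ S : (Fin n → Bool) → Finset (Fin n), (∏ y, pSet A ρ (S y)) * (1 - q) := by
        rw [← sum_mul, hweights, one_mul]
    _ ≤ ∑ S, (∏ y, pSet A ρ (S y)) * (#{z | E (buildF M S z)} / Fintype.card Z) := by
        gcongr with S
        · exact prod_nonneg fun y _ => pSet_nonneg A hρ0 hρ1 (S y)
        · have hsplit := card_filter_add_card_filter_not (s := (univ : Finset Z))
            (fun z => E (buildF M S z))
          rw [card_univ] at hsplit
          rw [le_div_iff₀ hZ]
          have : (#{z | E (buildF M S z)} : ℝ) + #{z | ¬ E (buildF M S z)} = Fintype.card Z := by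
            exact_mod_cast hsplit
          linarith [hE S]
    _ = prSH n M A ρ E := by
        refine sum_congr rfl fun S _ => ?_
        rw [natCast_card_filter, sum_div, mul_sum]
        exact sum_congr rfl fun z _ => by ring

theorem one_sub_exp_le_prSH_exists_disjointBichromatic {n : ℕ} {M A V : Finset (Fin n)}
    {ρ : ℝ} (hρ0 : 0 ≤ ρ) (hρ1 : ρ ≤ 1) {ℓ : Fin n} (hℓV : ℓ ∈ V) (hℓM : ℓ ∈ M) :
    1 - Real.exp (-(2 ^ #M / 100)) ≤
      prSH n M A ρ (fun f => ∃ C, DisjointBichromatic f V C ∧ (2 : ℝ) ^ n / 5 ≤ #C) := by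
  refine one_sub_le_prSH M A hρ0 hρ1 _ fun S => le_trans ?_ (card_filter_few_bichromatic_le M S hℓM)
  refine Nat.cast_le.2 (card_le_card fun z hz => ?_)
  simp only [mem_filter, mem_univ, true_and] at hz ⊢
  exact lt_of_not_ge fun h => hz (exists_disjointBichromatic_of_le_card _ hℓV h)

open Filter Asymptotics

theorem Real.logb_two_natCast_nonneg (n : ℕ) : 0 ≤ Real.logb 2 n :=
  div_nonneg (Real.log_natCast_nonneg n) (Real.log_nonneg one_le_two)

theorem eventually_sqrt_mul_logb_add_le {c : ℝ} (hc : 0 < c) :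
    ∀ᶠ n : ℕ in atTop, √n * Real.logb 2 n + 8 ≤ c * n := by
  suffices h : (fun x : ℝ => √x * Real.logb 2 x + 8) =o[atTop] id by
    filter_upwards [(h.bound hc).natCast_atTop] with n hn
    have := Real.logb_two_natCast_nonneg n
    simpa [abs_of_nonneg, this] using (le_abs_self _).trans hn
  have hlogb : (fun x => Real.logb 2 x) =o[atTop] fun x => x ^ (1 / 2 : ℝ) :=
    (isLittleO_log_rpow_atTop (by norm_num)).const_mul_left (Real.log 2)⁻¹ |>.congr_left
      fun x => by simp [Real.logb, div_eq_inv_mul]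
  have hsqrt : (fun x : ℝ => √x) =O[atTop] fun x => x ^ (1 / 2 : ℝ) :=
    isBigO_refl _ _ |>.congr_left fun x => (Real.sqrt_eq_rpow x).symm
  refine (hsqrt.mul_isLittleO hlogb |>.trans_isBigO ?_).add (isLittleO_const_id_atTop 8)
  refine (isBigO_refl _ _).congr' ?_ EventuallyEq.rfl
  filter_upwards [eventually_gt_atTop 0] with x hx
  rw [← Real.rpow_add hx]
  norm_num

theorem add_le_natSub_ceil {α : ℝ} (hα₁ : 1 / 2 < α) (hα₂ : α < 1) {n : ℕ}
    (hn : √n * Real.logb 2 n + 8 ≤ (α - 1 / 2) * n) :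
    (α - 1 / 2) * n + 7 ≤
      ((n - ⌈2 * (1 - α) * (n : ℝ) + (1 - α) * √n * Real.logb 2 n⌉₊ : ℕ) : ℝ) := by
  have hlog : 0 ≤ √n * Real.logb 2 n :=
    mul_nonneg (Real.sqrt_nonneg _) (Real.logb_two_natCast_nonneg n)
  have hm := Nat.ceil_lt_add_one (R := ℝ)
    (a := 2 * (1 - α) * (n : ℝ) + (1 - α) * √n * Real.logb 2 n) (by nlinarith)
  have hmn : ⌈2 * (1 - α) * (n : ℝ) + (1 - α) * √n * Real.logb 2 n⌉₊ ≤ n := by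
    have : (⌈2 * (1 - α) * (n : ℝ) + (1 - α) * √n * Real.logb 2 n⌉₊ : ℝ) ≤ n := by nlinarith
    exact_mod_cast this
  rw [Nat.cast_sub hmn]
  nlinarith

theorem two_rpow_le_two_pow_div {x : ℝ} {t : ℕ} (h : x + 7 ≤ t) :
    (2 : ℝ) ^ x ≤ 2 ^ t / 100 := by
  calc (2 : ℝ) ^ x ≤ 2 ^ ((t : ℝ) - 7) := Real.rpow_le_rpow_of_exponent_le one_le_two (by linarith)
    _ = 2 ^ t / 128 := by rw [Real.rpow_sub two_pos, Real.rpow_natCast]; norm_num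
    _ ≤ 2 ^ t / 100 := by gcongr; norm_num

theorem stmt5 (α : ℝ) (hα₁ : 1 / 2 < α) (hα₂ : α < 1) :
    ∃ (c : ℝ) (n₀ : ℕ), 0 < c ∧
      ∀ (n : ℕ) (ε : ℝ) (M A V : Finset (Fin n)),
        n₀ ≤ n →
        0 < ε → ε ≤ 1 / 6 →
        ∀ m t : ℕ,
          m = ⌈2 * (1 - α) * (n : ℝ) + (1 - α) * Real.sqrt n * Real.logb 2 n⌉₊ →
          t = n - m →
          M.card = t → A ⊆ Mᶜ →
          V ⊆ M ∪ A → (V ∩ M).Nonempty →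
          1 - Real.exp (-(2 : ℝ) ^ (c * n)) ≤
            prSH n M A (ε / Real.sqrt n)
              (fun f => ∃ C, DisjointBichromatic f V C ∧ (2 : ℝ) ^ n / 5 ≤ (C.card : ℝ)) := by
  have hc : 0 < α - 1 / 2 := by linarith
  obtain ⟨n₀, hn₀⟩ := eventually_atTop.1
    ((eventually_sqrt_mul_logb_add_le hc).and (eventually_ge_atTop 1))
  refine ⟨α - 1 / 2, n₀, hc, fun n ε M A V hn hε hε6 m t hm ht hM _ _ hVM => ?_⟩
  obtain ⟨hgrowth, hn1⟩ := hn₀ n hn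
  obtain ⟨ℓ, hℓ⟩ := hVM
  obtain ⟨hℓV, hℓM⟩ := mem_inter.1 hℓ
  have hρ1 : ε / √n ≤ 1 :=
    div_le_one_of_le₀ (by linarith [Real.one_le_sqrt.2 (show (1 : ℝ) ≤ n by exact_mod_cast hn1)])
      (Real.sqrt_nonneg _)
  have ht : (α - 1 / 2) * n + 7 ≤ #M := by
    rw [hM, ht, hm]
    exact add_le_natSub_ceil hα₁ hα₂ hgrowth
  refine le_trans ?_ (one_sub_exp_le_prSH_exists_disjointBichromatic (by positivity) hρ1 hℓV hℓM)
  gcongr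
  exact two_rpow_le_two_pow_div ht
end

section
/- There exists an absolute constant C > 0 such that for every γ > 0 there is n₀ ∈ ℕ with the following property: for all n ≥ n₀ and all reals ε with C·(log₂ n)/2^n ≤ ε ≤ 1/5, if g : {0,1}^n → {0,1} is a random function whose values g(x), x ∈ {0,1}^n, are independent and each equal to 1 with probability 3ε and 0 with probability 1 − 3ε, then Pr[g is ε-far from every (n−1)-junta] ≥ 1 − γ. -/
/-!
Let `X g` be the number of ones of `g` and, for a coordinate `i`, let `Y i g` be the number of
edges `{x, x + eᵢ}` of the cube on which `g` is identically one. If `h` ignores coordinate `i`,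
then on each of the `X g - 2 * Y i g` edges in direction `i` on which `g` is not constant, `h`
disagrees with `g` at an endpoint; and every `(n - 1)`-junta ignores some coordinate.

`X` is a sum of `2ⁿ` independent indicators with mean `3ε`, and `Y i` a sum of `2ⁿ⁻¹` independent
indicators (of disjoint edges) with mean `9ε²`, so their variances are at most their means.
Chebyshev's inequality and a union bound over `X` and the `n` counts `Y i` show that, outside
an event of probability at most `300 / (ε 2ⁿ) + 1800 n / 2ⁿ`, we have `X ≥ 2.9 ε 2ⁿ` and
`Y i ≤ 4.5 ε² 2ⁿ + ε 2ⁿ / 20` for all `i`, whence `X - 2 Y i ≥ (2.8 - 9ε) ε 2ⁿ ≥ ε 2ⁿ`.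
The failure probability tends to `0` as soon as `ε 2ⁿ ≥ log₂ n`, so `C = 1` works.
-/

open Finset

section BernoulliWeight

variable {α : Type*} [Fintype α]

def bernoulliWeight (p : ℝ) (g : α → Bool) : ℝ := ∏ x, if g x then p else 1 - p

def allOnes (s : Finset α) (g : α → Bool) : ℝ := if ∀ x ∈ s, g x then 1 else 0

lemma bernoulliWeight_nonneg {p : ℝ} (hp0 : 0 ≤ p) (hp1 : p ≤ 1) (g : α → Bool) :
    0 ≤ bernoulliWeight p g :=
  prod_nonneg fun x _ => by split <;> linarith

variable [DecidableEq α]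

lemma allOnes_union (s t : Finset α) (g : α → Bool) :
    allOnes (s ∪ t) g = allOnes s g * allOnes t g := by
  simp only [allOnes, forall_mem_union, ite_zero_mul_ite_zero, one_mul]

lemma sum_bernoulliWeight_mul_allOnes (p : ℝ) (s : Finset α) :
    ∑ g : α → Bool, bernoulliWeight p g * allOnes s g = p ^ #s := by
  calc ∑ g : α → Bool, bernoulliWeight p g * allOnes s g
      = ∑ g : α → Bool, ∏ x, (if g x then p else 1 - p) *
          (if x ∈ s then (if g x then 1 else 0) else 1) := by
        simp only [allOnes, prod_mul_distrib, Fintype.prod_ite_mem, prod_boole, bernoulliWeight]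
    _ = ∏ x, ∑ b : Bool, (if b then p else 1 - p) *
          (if x ∈ s then (if b then 1 else 0) else 1) := by
        rw [Fintype.prod_sum]
    _ = ∏ x, if x ∈ s then p else 1 := by
        congr! 1 with x
        split_ifs <;> simp
    _ = p ^ #s := by rw [Fintype.prod_ite_mem, prod_const]

lemma sum_bernoulliWeight (p : ℝ) : ∑ g : α → Bool, bernoulliWeight p g = 1 := by
  simpa [allOnes] using sum_bernoulliWeight_mul_allOnes p (∅ : Finset α)

lemma sum_bernoulliWeight_mul_allOnes_sub_mul (p : ℝ) (s t : Finset α) :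
    ∑ g : α → Bool, bernoulliWeight p g * ((allOnes s g - p ^ #s) * (allOnes t g - p ^ #t)) =
      p ^ #(s ∪ t) - p ^ #s * p ^ #t := by
  have expand : ∀ g : α → Bool,
      bernoulliWeight p g * ((allOnes s g - p ^ #s) * (allOnes t g - p ^ #t)) =
        bernoulliWeight p g * allOnes (s ∪ t) g - p ^ #t * (bernoulliWeight p g * allOnes s g)
          - p ^ #s * (bernoulliWeight p g * allOnes t g) + p ^ #s * p ^ #t * bernoulliWeight p g := by
    intro g
    rw [allOnes_union]
    ring
  simp only [expand, sum_add_distrib, sum_sub_distrib, ← mul_sum, sum_bernoulliWeight_mul_allOnes]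
  rw [sum_bernoulliWeight]
  ring

lemma sum_bernoulliWeight_mul_sq_le {p : ℝ} (hp0 : 0 ≤ p) {β : Type*}
    (P : Finset β) (T : β → Finset α) (hT : (P : Set β).PairwiseDisjoint T) :
    ∑ g : α → Bool, bernoulliWeight p g * (∑ b ∈ P, (allOnes (T b) g - p ^ #(T b))) ^ 2 ≤
      ∑ b ∈ P, p ^ #(T b) := by
  calc ∑ g : α → Bool, bernoulliWeight p g * (∑ b ∈ P, (allOnes (T b) g - p ^ #(T b))) ^ 2
      = ∑ b ∈ P, ∑ c ∈ P, ∑ g : α → Bool, bernoulliWeight p g *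
          ((allOnes (T b) g - p ^ #(T b)) * (allOnes (T c) g - p ^ #(T c))) := by
        simp_rw [sq, sum_mul_sum, mul_sum]
        rw [sum_comm]
        exact sum_congr rfl fun b _ => sum_comm
    _ = ∑ b ∈ P, (p ^ #(T b) - p ^ #(T b) * p ^ #(T b)) := by
        refine sum_congr rfl fun b hb => ?_
        rw [sum_eq_single b, sum_bernoulliWeight_mul_allOnes_sub_mul, union_self]
        · intro c hc hcb
          rw [sum_bernoulliWeight_mul_allOnes_sub_mul,
            card_union_of_disjoint (hT hb hc hcb.symm), pow_add, sub_self]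
        · exact fun hb' => absurd hb hb'
    _ ≤ ∑ b ∈ P, p ^ #(T b) := sum_le_sum fun b _ => sub_le_self _ (by positivity)

lemma sum_filter_le_sum_mul_sq_div {ι : Type*} [Fintype ι] {w f : ι → ℝ} (hw : ∀ i, 0 ≤ w i)
    {t : ℝ} (ht : 0 < t) (E : ι → Prop) [DecidablePred E] (hE : ∀ i, E i → t ≤ |f i|) :
    ∑ i with E i, w i ≤ (∑ i, w i * f i ^ 2) / t ^ 2 := by
  rw [le_div_iff₀ (by positivity), sum_mul]
  calc ∑ i with E i, w i * t ^ 2 ≤ ∑ i with E i, w i * f i ^ 2 := by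
        refine sum_le_sum fun i hi => mul_le_mul_of_nonneg_left ?_ (hw i)
        rw [← sq_abs (f i)]
        exact pow_le_pow_left₀ ht.le (hE i (mem_filter.1 hi).2) 2
    _ ≤ ∑ i, w i * f i ^ 2 :=
        sum_le_sum_of_subset_of_nonneg (filter_subset _ _) fun i _ _ => by
          have := hw i
          positivity

lemma sum_bernoulliWeight_filter_le {p : ℝ} (hp0 : 0 ≤ p) (hp1 : p ≤ 1)
    {β : Type*} (P : Finset β) (T : β → Finset α) (hT : (P : Set β).PairwiseDisjoint T)
    {t : ℝ} (ht : 0 < t) (E : (α → Bool) → Prop) [DecidablePred E]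
    (hE : ∀ g, E g → t ≤ |∑ b ∈ P, (allOnes (T b) g - p ^ #(T b))|) :
    ∑ g with E g, bernoulliWeight p g ≤ (∑ b ∈ P, p ^ #(T b)) / t ^ 2 :=
  (sum_filter_le_sum_mul_sq_div (bernoulliWeight_nonneg hp0 hp1) ht E hE).trans
    (div_le_div_of_nonneg_right (sum_bernoulliWeight_mul_sq_le hp0 P T hT) (sq_nonneg t))

lemma sum_bernoulliWeight_filter_sum_allOnes_singleton_le {p t : ℝ} (hp0 : 0 ≤ p) (hp1 : p ≤ 1)
    (ht : 0 < t) :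
    ∑ g : α → Bool with ∑ x, allOnes {x} g ≤ Fintype.card α * p - t, bernoulliWeight p g ≤
      Fintype.card α * p / t ^ 2 := by
  have hT : ((univ : Finset α) : Set α).PairwiseDisjoint fun x => ({x} : Finset α) :=
    fun x _ y _ hxy => disjoint_singleton.2 hxy
  convert sum_bernoulliWeight_filter_le hp0 hp1 univ (fun x => {x}) hT ht _ fun g hg => ?_ using 2
  · simp
  · simp only [card_singleton, pow_one, sum_sub_distrib, sum_const, card_univ, nsmul_eq_mul]
    rw [abs_sub_comm]
    exact le_abs.2 (Or.inl (by linarith))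

lemma sum_filter_or_exists_le {ι κ : Type*} [Fintype ι] [Fintype κ] {w : ι → ℝ}
    (hw : ∀ i, 0 ≤ w i) (A : ι → Prop) (B : κ → ι → Prop) [DecidablePred A]
    [∀ k, DecidablePred (B k)] [DecidablePred fun i => A i ∨ ∃ k, B k i] :
    ∑ i with (A i ∨ ∃ k, B k i), w i ≤ ∑ i with A i, w i + ∑ k, ∑ i with B k i, w i := by
  simp only [sum_filter]
  rw [sum_comm, ← sum_add_distrib]
  refine sum_le_sum fun i _ => ?_
  have hsum : 0 ≤ ∑ k, if B k i then w i else 0 := sum_nonneg fun k _ => by split <;> simp [hw i]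
  by_cases hA : A i
  · rw [if_pos (Or.inl hA), if_pos hA]
    linarith
  by_cases hB : ∃ k, B k i
  · obtain ⟨k, hk⟩ := hB
    rw [if_pos (Or.inr ⟨k, hk⟩), if_neg hA, zero_add]
    calc w i = if B k i then w i else 0 := (if_pos hk).symm
      _ ≤ _ := single_le_sum (f := fun k => if B k i then w i else 0)
          (fun k _ => by split <;> simp [hw i]) (mem_univ k)
  · rw [if_neg (by tauto), if_neg hA, zero_add]
    exact hsum

end BernoulliWeight

section HypercubeFlips

variable {n : ℕ}

def flipBit (i : Fin n) (x : Fin n → Bool) : Fin n → Bool := Function.update x i (!x i)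

@[simp]
lemma flipBit_apply_self (i : Fin n) (x : Fin n → Bool) : flipBit i x i = !x i :=
  Function.update_self i _ x

lemma flipBit_apply_of_ne {i j : Fin n} (h : j ≠ i) (x : Fin n → Bool) : flipBit i x j = x j :=
  Function.update_of_ne h _ x

@[simp]
lemma flipBit_flipBit (i : Fin n) (x : Fin n → Bool) : flipBit i (flipBit i x) = x := by
  simp [flipBit]

lemma flipBit_ne_self (i : Fin n) (x : Fin n → Bool) : flipBit i x ≠ x :=
  fun h => Bool.not_ne_self (x i) (by simpa using congrFun h i)

def lowerHalf (i : Fin n) : Finset (Fin n → Bool) := {x | x i = false}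

lemma sum_lowerHalf_add_flipBit {M : Type*} [AddCommMonoid M] (i : Fin n)
    (F : (Fin n → Bool) → M) :
    ∑ x ∈ lowerHalf i, (F x + F (flipBit i x)) = ∑ x, F x := by
  have hflip : ∑ x ∈ lowerHalf i, F (flipBit i x) = ∑ x with ¬x i = false, F x :=
    sum_nbij' (flipBit i) (flipBit i) (by simp [lowerHalf]) (by simp [lowerHalf]) (by simp)
      (by simp) (by simp)
  rw [sum_add_distrib, hflip, lowerHalf, sum_filter_add_sum_filter_not]

lemma card_lowerHalf (i : Fin n) : (#(lowerHalf i) : ℝ) = 2 ^ n / 2 := by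
  have h := sum_lowerHalf_add_flipBit i fun _ => (1 : ℝ)
  simp only [sum_const, nsmul_eq_mul, mul_one, card_univ, Fintype.card_fun, Fintype.card_bool,
    Fintype.card_fin] at h
  push_cast at h
  linarith

lemma sum_allOnes_singleton_sub_le_card_ne (i : Fin n) (g h : (Fin n → Bool) → Bool)
    (hh : ∀ x, h (flipBit i x) = h x) :
    ∑ x, allOnes {x} g - 2 * ∑ x ∈ lowerHalf i, allOnes {x, flipBit i x} g ≤
      #{x | g x ≠ h x} := by
  rw [← sum_lowerHalf_add_flipBit i, mul_sum, ← sum_sub_distrib, natCast_card_filter,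
    ← sum_lowerHalf_add_flipBit i]
  refine sum_le_sum fun x _ => ?_
  cases hx : g x <;> cases hfx : g (flipBit i x) <;> cases hhx : h x <;>
    norm_num [allOnes, hh x, hx, hfx, hhx]

lemma IsJunta.exists_flipBit_invariant {h : (Fin n → Bool) → Bool} (hn : 0 < n)
    (hh : IsJunta n (n - 1) h) : ∃ i, ∀ x, h (flipBit i x) = h x := by
  obtain ⟨S, hS, hSh⟩ := hh
  obtain ⟨i, -, hi⟩ := exists_mem_notMem_of_card_lt_card (s := S) (t := univ)
    (by rw [card_univ, Fintype.card_fin]; omega)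
  exact ⟨i, fun x => hSh _ _ fun j hj => flipBit_apply_of_ne (ne_of_mem_of_not_mem hj hi) x⟩

lemma farFromJuntas_of_forall_le (hn : 0 < n) {ε : ℝ} {g : (Fin n → Bool) → Bool}
    (hg : ∀ i, ε * 2 ^ n ≤
      ∑ x, allOnes {x} g - 2 * ∑ x ∈ lowerHalf i, allOnes {x, flipBit i x} g) :
    FarFromJuntas n (n - 1) ε g := by
  intro h hh
  obtain ⟨i, hi⟩ := hh.exists_flipBit_invariant hn
  exact (hg i).trans (sum_allOnes_singleton_sub_le_card_ne i g h hi)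

lemma pairwiseDisjoint_lowerHalf_pair (i : Fin n) :
    ((lowerHalf i : Finset (Fin n → Bool)) : Set (Fin n → Bool)).PairwiseDisjoint
      fun x => ({x, flipBit i x} : Finset (Fin n → Bool)) := by
  intro x hx y hy hxy
  simp only [coe_filter, lowerHalf, mem_univ, true_and, Set.mem_ofPred_eq] at hx hy
  simp only [disjoint_insert_left, disjoint_insert_right, disjoint_singleton, mem_insert,
    mem_singleton, not_or]
  refine ⟨⟨hxy.symm, fun h => ?_⟩, fun h => ?_, fun h => ?_⟩
  · simpa [hx, hy] using congrFun h i
  · simpa [hx, hy] using congrFun h i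
  · exact hxy (by simpa using congrArg (flipBit i) h)

lemma sum_bernoulliWeight_filter_le_sum_allOnes_pair (i : Fin n) {p t : ℝ} (hp0 : 0 ≤ p)
    (hp1 : p ≤ 1) (ht : 0 < t) :
    ∑ g with #(lowerHalf i) * p ^ 2 + t ≤ ∑ x ∈ lowerHalf i, allOnes {x, flipBit i x} g,
      bernoulliWeight p g ≤ #(lowerHalf i) * p ^ 2 / t ^ 2 := by
  have hcard : ∀ x, #{x, flipBit i x} = 2 := fun x => card_pair (flipBit_ne_self i x).symm
  convert sum_bernoulliWeight_filter_le hp0 hp1 (lowerHalf i) (fun x => {x, flipBit i x})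
    (pairwiseDisjoint_lowerHalf_pair i) ht _ fun g hg => ?_ using 2
  · simp [hcard]
  · simp only [hcard, sum_sub_distrib, sum_const, nsmul_eq_mul]
    exact le_abs.2 (Or.inl (by linarith))

end HypercubeFlips

open Classical in
lemma one_sub_le_sum_farFromJuntas {n : ℕ} (hn : 0 < n) {ε : ℝ} (hε : 0 < ε) (hε5 : ε ≤ 1 / 5) :
    1 - (300 / (ε * 2 ^ n) + n * (1800 / 2 ^ n)) ≤
      ∑ g : (Fin n → Bool) → Bool,
        (if FarFromJuntas n (n - 1) ε g then 1 else 0) * bernoulliWeight (3 * ε) g := by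
  have hp0 : 0 ≤ 3 * ε := by positivity
  have hp1 : 3 * ε ≤ 1 := by linarith
  have hw := bernoulliWeight_nonneg hp0 hp1 (α := Fin n → Bool)
  have hcube : (Fintype.card (Fin n → Bool) : ℝ) = 2 ^ n := by simp
  have hX := sum_bernoulliWeight_filter_sum_allOnes_singleton_le (α := Fin n → Bool) hp0 hp1
    (t := ε * 2 ^ n / 10) (by positivity)
  have hY := fun i : Fin n => sum_bernoulliWeight_filter_le_sum_allOnes_pair i hp0 hp1
    (t := ε * 2 ^ n / 20) (by positivity)
  rw [hcube, show 2 ^ n * (3 * ε) / (ε * 2 ^ n / 10) ^ 2 = 300 / (ε * 2 ^ n) by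
    field_simp; ring] at hX
  simp only [card_lowerHalf, show 2 ^ n / 2 * (3 * ε) ^ 2 / (ε * 2 ^ n / 20) ^ 2 = 1800 / 2 ^ n by
    field_simp; ring] at hY
  have hfail : ∑ g with ¬FarFromJuntas n (n - 1) ε g, bernoulliWeight (3 * ε) g ≤
      300 / (ε * 2 ^ n) + n * (1800 / 2 ^ n) := calc
    _ ≤ ∑ g : (Fin n → Bool) → Bool with (∑ x, allOnes {x} g ≤ 2 ^ n * (3 * ε) - ε * 2 ^ n / 10 ∨
          ∃ i : Fin n, 2 ^ n / 2 * (3 * ε) ^ 2 + ε * 2 ^ n / 20 ≤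
            ∑ x ∈ lowerHalf i, allOnes {x, flipBit i x} g), bernoulliWeight (3 * ε) g := by
      refine sum_le_sum_of_subset_of_nonneg (monotone_filter_right _ fun g _ hg => ?_)
        fun g _ _ => hw g
      by_contra hgood
      push Not at hgood
      refine hg (farFromJuntas_of_forall_le hn fun i => ?_)
      nlinarith [hgood.1, hgood.2 i, mul_nonneg (mul_nonneg hε.le (sub_nonneg.2 hε5))
        (pow_nonneg zero_le_two n : (0 : ℝ) ≤ 2 ^ n)]
    _ ≤ 300 / (ε * 2 ^ n) + ∑ i : Fin n, 1800 / 2 ^ n :=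
      (sum_filter_or_exists_le hw _ _).trans (add_le_add hX (sum_le_sum fun i _ => hY i))
    _ = _ := by simp
  have htotal := sum_filter_add_sum_filter_not univ (FarFromJuntas n (n - 1) ε)
    (bernoulliWeight (3 * ε))
  rw [sum_bernoulliWeight] at htotal
  simp_rw [boole_mul, ← sum_filter]
  linarith

lemma tendsto_failureBound :
    Filter.Tendsto (fun n : ℕ => 300 / Real.logb 2 n + n * (1800 / 2 ^ n)) Filter.atTop
      (nhds 0) := by
  have hlog : Filter.Tendsto (fun n : ℕ => 300 / Real.logb 2 n) Filter.atTop (nhds 0) :=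
    Filter.Tendsto.div_atTop tendsto_const_nhds
      ((Real.tendsto_logb_atTop (by norm_num)).comp tendsto_natCast_atTop_atTop)
  have hgeom : Filter.Tendsto (fun n : ℕ => (n : ℝ) * (1800 / 2 ^ n)) Filter.atTop (nhds 0) := by
    convert (tendsto_self_mul_const_pow_of_lt_one (r := 1 / 2) (by norm_num)
      (by norm_num)).const_mul 1800 using 2 with n
    · rw [div_pow, one_pow]
      ring
    · simp
  simpa using hlog.add hgeom

open Classical in
theorem stmt16 :
    ∃ C : ℝ, 0 < C ∧ ∀ γ : ℝ, 0 < γ → ∃ n₀ : ℕ, ∀ (n : ℕ) (ε : ℝ),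
      n₀ ≤ n → C * Real.logb 2 n / 2 ^ n ≤ ε → ε ≤ 1 / 5 →
      1 - γ ≤ ∑ g : (Fin n → Bool) → Bool,
        (if FarFromJuntas n (n - 1) ε g then 1 else 0) *
          ∏ x : Fin n → Bool, (if g x then 3 * ε else 1 - 3 * ε) := by
  refine ⟨1, one_pos, fun γ hγ => ?_⟩
  obtain ⟨n₀, hn₀⟩ := Filter.eventually_atTop.1 (tendsto_failureBound.eventually_lt_const hγ)
  refine ⟨max n₀ 2, fun n ε hn hεlow hε5 => ?_⟩
  have hlog : 1 ≤ Real.logb 2 n := by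
    rw [Real.le_logb_iff_rpow_le (by norm_num) (by exact_mod_cast (by omega : 0 < n)),
      Real.rpow_one]
    exact_mod_cast le_of_max_le_right hn
  have hεn : Real.logb 2 n ≤ ε * 2 ^ n := by
    rwa [one_mul, div_le_iff₀ (by positivity)] at hεlow
  have hε : 0 < ε := pos_of_mul_pos_left (by linarith) (by positivity : (0 : ℝ) ≤ 2 ^ n)
  have hfail : 300 / (ε * 2 ^ n) ≤ 300 / Real.logb 2 n := by gcongr
  refine le_trans ?_ (one_sub_le_sum_farFromJuntas (by omega : 0 < n) hε hε5)
  linarith [hn₀ n (le_of_max_le_left hn)]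
end
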